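/- Let r^(1),...,r^(ρ) ∈ (0,1)^d be incomparable points with no coordinate ties and record-setting region S. Then S equals the union, over all ordered partitions Π = (Π_1,...,Π_d) of [ρ] into d (possibly empty) blocks, of the closed positive orthants O⁺(R_1^(Π_1),...,R_d^(Π_d)), where R_j^(P) := max_{i∈P} r^(i)_j (with max over the empty set equal to 0). -/

import Mathlib

/-!
A point `x` of the box is a record iff each `r i` fails to strictly dominate it in some
coordinate, i.e. `r i j ≤ x j` for some `j`. Choosing such a coordinate `k i` for every `i` is
choosing an ordered partition, and `x` lies above every `r i` in coordinate `k i` exactly when it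
lies above the block maxima `R_j`.
-/

open Set

/-- The record-setting region of the points `r 0, …, r (ρ-1)` within `[0,1)^d`. -/
def recordSet {d ρ : ℕ} (r : Fin ρ → Fin d → ℝ) : Set (Fin d → ℝ) :=
  {x | (∀ j, x j ∈ Set.Ico (0:ℝ) 1) ∧ ∀ i, ¬ ∀ j, x j < r i j}

/-- Over the reals an empty supremum is `0`, hence the hypothesis `0 ≤ a`. -/
theorem Real.biSup_le_iff {ι : Type*} [Finite ι] {p : ι → Prop} {f : ι → ℝ} {a : ℝ}
    (ha : 0 ≤ a) : (⨆ i, ⨆ (_ : p i), f i) ≤ a ↔ ∀ i, p i → f i ≤ a := by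
  refine ⟨fun h i hi => ?_, fun h => Real.iSup_le (fun i => Real.iSup_le (h i) ha) ha⟩
  refine le_trans ?_ ((le_ciSup (Finite.bddAbove_range _) i).trans h)
  rw [ciSup_pos hi]

theorem mem_recordSet_iff {d ρ : ℕ} {r : Fin ρ → Fin d → ℝ} {x : Fin d → ℝ} :
    x ∈ recordSet r ↔ (∀ j, x j ∈ Ico (0:ℝ) 1) ∧ ∀ i, ∃ j, r i j ≤ x j := by
  simp only [recordSet, mem_ofPred_eq, not_forall, not_lt]

theorem forall_exists_le_iff_exists_partition {ι κ : Type*} {r : ι → κ → ℝ} {x : κ → ℝ} :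
    (∀ i, ∃ j, r i j ≤ x j) ↔ ∃ k : ι → κ, ∀ j i, k i = j → r i j ≤ x j := by
  rw [Classical.skolem]
  exact exists_congr fun k => ⟨fun h j i hij => hij ▸ h i, fun h i => h (k i) i rfl⟩

theorem recordSet_eq_union_over_partitions_general (d ρ : ℕ)
    (r : Fin ρ → Fin d → ℝ) :
    recordSet r =
      ⋃ k : Fin ρ → Fin d,
        {y : Fin d → ℝ | (∀ j, y j ∈ Set.Ico (0:ℝ) 1) ∧
          ∀ j : Fin d, (⨆ i ∈ {i : Fin ρ | k i = j}, r i j) ≤ y j} := by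
  ext x
  rw [mem_recordSet_iff, mem_iUnion]
  refine ⟨fun ⟨hbox, hrec⟩ => ?_, fun ⟨k, hbox, hsup⟩ => ⟨hbox, ?_⟩⟩
  · obtain ⟨k, hk⟩ := forall_exists_le_iff_exists_partition.1 hrec
    exact ⟨k, hbox, fun j => (Real.biSup_le_iff (hbox j).1).2 (hk j)⟩
  · exact forall_exists_le_iff_exists_partition.2
      ⟨k, fun j => (Real.biSup_le_iff (hbox j).1).1 (hsup j)⟩

theorem recordSet_eq_union_over_partitions (d ρ : ℕ)
    (r : Fin ρ → Fin d → ℝ)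
    (hr : ∀ i j, r i j ∈ Set.Ioo (0:ℝ) 1)
    (hties : ∀ j : Fin d, Function.Injective (fun i => r i j))
    (hinc : ∀ i i' : Fin ρ, i ≠ i' → ¬ r i ≤ r i') :
    recordSet r =
      ⋃ k : Fin ρ → Fin d,
        {y : Fin d → ℝ | (∀ j, y j ∈ Set.Ico (0:ℝ) 1) ∧
          ∀ j : Fin d, (⨆ i ∈ {i : Fin ρ | k i = j}, r i j) ≤ y j} :=
  recordSet_eq_union_over_partitions_general d ρ r
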